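/- Let $\mathfrak{g}$ be the 13-dimensional real Lie algebra with basis $(X_1,X_2,X_3,X_4,X_5,X_6,X_9,X_{12},T_1,T_2,E_1,E_2,E_3)$ and nonzero brackets $[X_1,X_2]=X_4$, $[X_1,X_3]=X_5$, $[X_2,X_3]=X_6$, $[X_1,X_6]=X_9$, $[X_3,X_4]=X_{12}$, $[X_2,X_5]=X_9+X_{12}$, $[T_1,X_1]=-X_1$, $[T_1,X_3]=X_3$, $[T_1,X_4]=-X_4$, $[T_1,X_6]=X_6$, $[T_2,X_1]=-X_1$, $[T_2,X_2]=2X_2$, $[T_2,X_3]=-X_3$, $[T_2,X_4]=X_4$, $[T_2,X_5]=-2X_5$, $[T_2,X_6]=X_6$, $[E_1,E_2]=E_3$, $[E_1,E_3]=-X_9-X_{12}$. Then the center of $\mathfrak{g}$ is the span of $X_9$ and $X_{12}$. -/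

import Mathlib

/-- Structure constants of the 13-dimensional Lie algebra of STATEMENT 12, with basis
indexed as `X₁,…,X₆ ↦ 0,…,5`, `X₉ ↦ 6`, `X₁₂ ↦ 7`, `T₁ ↦ 8`, `T₂ ↦ 9`, `E₁ ↦ 10`,
`E₂ ↦ 11`, `E₃ ↦ 12`. -/
def br13 {L : Type*} [LieRing L] [LieAlgebra ℝ L] (b : Fin 13 → L) (i j : Fin 13) : L :=
  match i.val, j.val with
  | 0, 1 => b 3        | 1, 0 => -b 3          -- [X₁,X₂] = X₄
  | 0, 2 => b 4        | 2, 0 => -b 4          -- [X₁,X₃] = X₅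
  | 1, 2 => b 5        | 2, 1 => -b 5          -- [X₂,X₃] = X₆
  | 0, 5 => b 6        | 5, 0 => -b 6          -- [X₁,X₆] = X₉
  | 2, 3 => b 7        | 3, 2 => -b 7          -- [X₃,X₄] = X₁₂
  | 1, 4 => b 6 + b 7  | 4, 1 => -(b 6 + b 7)  -- [X₂,X₅] = X₉ + X₁₂
  | 8, 0 => -b 0       | 0, 8 => b 0           -- [T₁,X₁] = -X₁
  | 8, 2 => b 2        | 2, 8 => -b 2          -- [T₁,X₃] = X₃
  | 8, 3 => -b 3       | 3, 8 => b 3           -- [T₁,X₄] = -X₄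
  | 8, 5 => b 5        | 5, 8 => -b 5          -- [T₁,X₆] = X₆
  | 9, 0 => -b 0       | 0, 9 => b 0           -- [T₂,X₁] = -X₁
  | 9, 1 => (2 : ℝ) • b 1 | 1, 9 => -((2 : ℝ) • b 1)  -- [T₂,X₂] = 2X₂
  | 9, 2 => -b 2       | 2, 9 => b 2           -- [T₂,X₃] = -X₃
  | 9, 3 => b 3        | 3, 9 => -b 3          -- [T₂,X₄] = X₄
  | 9, 4 => -((2 : ℝ) • b 4) | 4, 9 => (2 : ℝ) • b 4  -- [T₂,X₅] = -2X₅
  | 9, 5 => b 5        | 5, 9 => -b 5          -- [T₂,X₆] = X₆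
  | 10, 11 => b 12     | 11, 10 => -b 12       -- [E₁,E₂] = E₃
  | 10, 12 => -b 6 - b 7 | 12, 10 => b 6 + b 7 -- [E₁,E₃] = -X₉ - X₁₂
  | _, _ => 0

/-!
The torus spanned by `T₁, T₂` acts on `X₁, …, X₆` with nonzero weights, so the brackets of a
central `z` with `T₁` and `T₂` kill its coordinates along `X₁, …, X₆`. The brackets with `X₁`
and `X₃` then kill its coordinates along `T₁ ± T₂`, and those with `E₁` and `E₂` its coordinates
along `E₁, E₂, E₃`. Conversely `X₉` and `X₁₂` bracket trivially with every basis vector.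
-/

section
variable {R L ι : Type*} [CommRing R] [LieRing L] [LieAlgebra R L]

theorem Module.Basis.repr_lie_basis_apply [Fintype ι] (b : Module.Basis ι R L) (z : L)
    (j k : ι) : b.repr ⁅z, b j⁆ k = ∑ i, b.repr z i * b.repr ⁅b i, b j⁆ k :=
  calc b.repr ⁅z, b j⁆ k = b.repr ⁅∑ i, b.repr z i • b i, b j⁆ k := by rw [b.sum_repr]
    _ = _ := by
      simp only [sum_lie, smul_lie, map_sum, map_smul, Finsupp.finsetSum_apply,
        Finsupp.smul_apply, smul_eq_mul]

theorem Module.Basis.forall_lie_eq_zero_iff (b : Module.Basis ι R L) (z : L) :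
    (∀ y : L, ⁅z, y⁆ = 0) ↔ ∀ j, ⁅z, b j⁆ = 0 := by
  refine ⟨fun h j => h (b j), fun h y => ?_⟩
  have had : LieAlgebra.ad R L z = 0 := b.ext h
  simpa using LinearMap.congr_fun had y

end

section
variable {L : Type*} [LieRing L] [LieAlgebra ℝ L] (b : Fin 13 → L)

theorem br13_six (j : Fin 13) : br13 b 6 j = 0 := by
  fin_cases j <;> rfl

theorem br13_seven (j : Fin 13) : br13 b 7 j = 0 := by
  fin_cases j <;> rfl

theorem br13_zero_right (i : Fin 13) :
    br13 b i 0 = ![0, -b 3, -b 4, 0, 0, -b 6, 0, 0, -b 0, -b 0, 0, 0, 0] i := by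
  fin_cases i <;> rfl

theorem br13_two_right (i : Fin 13) :
    br13 b i 2 = ![b 4, b 5, 0, -b 7, 0, 0, 0, 0, b 2, -b 2, 0, 0, 0] i := by
  fin_cases i <;> rfl

theorem br13_eight_right (i : Fin 13) :
    br13 b i 8 = ![b 0, 0, -b 2, b 3, 0, -b 5, 0, 0, 0, 0, 0, 0, 0] i := by
  fin_cases i <;> rfl

theorem br13_nine_right (i : Fin 13) :
    br13 b i 9 =
      ![b 0, -((2 : ℝ) • b 1), b 2, -b 3, (2 : ℝ) • b 4, -b 5, 0, 0, 0, 0, 0, 0, 0] i := by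
  fin_cases i <;> rfl

theorem br13_ten_right (i : Fin 13) :
    br13 b i 10 = ![0, 0, 0, 0, 0, 0, 0, 0, 0, 0, 0, -b 12, b 6 + b 7] i := by
  fin_cases i <;> rfl

theorem br13_eleven_right (i : Fin 13) :
    br13 b i 11 = ![0, 0, 0, 0, 0, 0, 0, 0, 0, 0, b 12, 0, 0] i := by
  fin_cases i <;> rfl

end

theorem mem_span_of_forall_lie_eq_zero {L : Type*} [LieRing L] [LieAlgebra ℝ L]
    (b : Module.Basis (Fin 13) ℝ L) (hbr : ∀ i j : Fin 13, ⁅b i, b j⁆ = br13 b i j)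
    {z : L} (hz : ∀ y : L, ⁅z, y⁆ = 0) : z ∈ Submodule.span ℝ ({b 6, b 7} : Set L) := by
  have hcoord : ∀ j k, ∑ i, b.repr z i * b.repr (br13 b i j) k = 0 := fun j k => by
    simp only [← hbr, ← b.repr_lie_basis_apply, hz, map_zero, Finsupp.zero_apply]
  have h0 : b.repr z 0 = 0 := by simpa [Fin.sum_univ_succ, br13_eight_right] using hcoord 8 0
  have h2 : b.repr z 2 = 0 := by simpa [Fin.sum_univ_succ, br13_eight_right] using hcoord 8 2
  have h3 : b.repr z 3 = 0 := by simpa [Fin.sum_univ_succ, br13_eight_right] using hcoord 8 3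
  have h5 : b.repr z 5 = 0 := by simpa [Fin.sum_univ_succ, br13_eight_right] using hcoord 8 5
  have h1 : b.repr z 1 = 0 := by simpa [Fin.sum_univ_succ, br13_nine_right] using hcoord 9 1
  have h4 : b.repr z 4 = 0 := by simpa [Fin.sum_univ_succ, br13_nine_right] using hcoord 9 4
  have h10 : b.repr z 10 = 0 := by
    simpa [Fin.sum_univ_succ, br13_eleven_right] using hcoord 11 12
  have h11 : b.repr z 11 = 0 := by simpa [Fin.sum_univ_succ, br13_ten_right] using hcoord 10 12
  have h12 : b.repr z 12 = 0 := by simpa [Fin.sum_univ_succ, br13_ten_right] using hcoord 10 6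
  obtain ⟨h8, h9⟩ : b.repr z 8 = 0 ∧ b.repr z 9 = 0 := by
    have hX₁ := hcoord 0 0
    have hX₃ := hcoord 2 2
    simp [Fin.sum_univ_succ, br13_zero_right, br13_two_right] at hX₁ hX₃
    constructor <;> linarith
  rw [← Set.image_pair, b.mem_span_image]
  intro i hi
  fin_cases i <;> simp_all

/-- the center of the 13-dimensional Lie algebra `𝔤` described above is the
span of `X₉` and `X₁₂`. -/
theorem statement12 {L : Type*} [LieRing L] [LieAlgebra ℝ L]
    (b : Module.Basis (Fin 13) ℝ L)
    (hbr : ∀ i j : Fin 13, ⁅b i, b j⁆ = br13 (⇑b) i j) :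
    ∀ z : L, (∀ y : L, ⁅z, y⁆ = 0) ↔ z ∈ Submodule.span ℝ ({b 6, b 7} : Set L) := by
  refine fun z => ⟨mem_span_of_forall_lie_eq_zero b hbr, fun hz => ?_⟩
  obtain ⟨s, t, rfl⟩ := Submodule.mem_span_pair.mp hz
  refine (b.forall_lie_eq_zero_iff _).mpr fun j => ?_
  simp [hbr, br13_six, br13_seven]
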